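/- arXiv:2206.03534 — 3 statements merged into one kernel-verified Lean document; each statement's English description precedes it below -/
import Mathlib

section
/- (Lemma 2.3, Lorentz L^{3/2,1} bound for the truncated Gaussian.) Let x₀ ∈ ℝ³, 0 < r < R < ∞, and T > 0. Then there is a constant C = C(R,r,T) such that for every x ∈ B_r(x₀) and every t ∈ (0,T], ∫₀^∞ ( vol{ y ∈ ℝ³ : ‖y − x₀‖ > R and e^{−‖x−y‖²/(4t)} ≥ s } )^{2/3} ds ≤ C e^{−(R−r)²/(4t)}. (The left-hand side is, up to the fixed factor 3/2, the Lorentz L^{3/2,1} norm in y of the function e^{−‖x−y‖²/(4t)} · 1_{{‖y−x₀‖>R}}(y).) -/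
/-!
On `{‖y - x₀‖ > R}` we have `‖x - y‖ > R - r`, so the superlevel set at height `s` is empty for
`s ≥ M := e^{-(R-r)²/(4t)}`, and for `s < M` it lies in the ball about `x` of radius
`√(4t log(1/s))`, whose volume to the power `2/n` is `4t log(1/s)` times a dimensional constant.
Hence the integral is at most that constant times `4t ∫₀^M log(1/s) ds = ((R - r)² + 4t) M`.
-/

open MeasureTheory Real Set Metric
open scoped ENNReal NNReal

noncomputable section

abbrev E3 := EuclideanSpace ℝ (Fin 3)

open Module

lemma exp_neg_sq_div_le_one (a : ℝ) {t : ℝ} (ht : 0 ≤ t) : exp (-a ^ 2 / (4 * t)) ≤ 1 :=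
  exp_le_one_iff.2 (div_nonpos_of_nonpos_of_nonneg (neg_nonpos.2 (sq_nonneg a)) (by positivity))

section Superlevel

variable {E : Type*} [NormedAddCommGroup E]

lemma superlevel_exp_neg_sq_subset_closedBall (x : E) {t s : ℝ} (ht : 0 < t) (hs : 0 < s) :
    {y : E | s ≤ exp (-‖x - y‖ ^ 2 / (4 * t))} ⊆ closedBall x √(4 * t * log s⁻¹) := by
  intro y hy
  have hlog : log s ≤ -‖x - y‖ ^ 2 / (4 * t) := by
    simpa only [log_exp] using log_le_log hs hy
  rw [mem_closedBall, dist_comm, dist_eq_norm]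
  refine le_sqrt_of_sq_le ?_
  rw [log_inv]
  rw [le_div_iff₀ (by positivity)] at hlog
  linarith

lemma exp_neg_sq_div_lt_of_lt_norm_sub {x x₀ y : E} {r R t : ℝ} (hx : ‖x - x₀‖ < r)
    (hrR : r ≤ R) (hy : R < ‖y - x₀‖) (ht : 0 < t) :
    exp (-‖x - y‖ ^ 2 / (4 * t)) < exp (-(R - r) ^ 2 / (4 * t)) := by
  have hdist : R - r < ‖x - y‖ := by
    linarith [norm_sub_le_norm_sub_add_norm_sub y x x₀, norm_sub_rev x y]
  have hsq : (R - r) ^ 2 < ‖x - y‖ ^ 2 := pow_lt_pow_left₀ hdist (by linarith) two_ne_zero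
  gcongr

end Superlevel

lemma lintegral_Ioc_ofReal_log_inv {M : ℝ} (hM0 : 0 ≤ M) (hM1 : M ≤ 1) :
    ∫⁻ s in Ioc 0 M, ENNReal.ofReal (log s⁻¹) = ENNReal.ofReal (M * (1 - log M)) := by
  have hnonneg : 0 ≤ᵐ[volume.restrict (Ioc 0 M)] fun s ↦ log s⁻¹ := by
    filter_upwards [ae_restrict_mem measurableSet_Ioc] with s hs
    exact log_nonneg ((one_le_inv₀ hs.1).2 (hs.2.trans hM1))
  have hint : IntegrableOn (fun s ↦ log s⁻¹) (Ioc 0 M) := by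
    simp only [log_inv]
    exact ((intervalIntegrable_iff_integrableOn_Ioc_of_le hM0).1
      intervalIntegral.intervalIntegrable_log').neg
  rw [← ofReal_integral_eq_lintegral_ofReal hint hnonneg, ← intervalIntegral.integral_of_le hM0]
  simp only [log_inv, intervalIntegral.integral_neg, integral_log_from_zero]
  ring_nf

section AddHaar

variable {E : Type*} [NormedAddCommGroup E] [NormedSpace ℝ E] [FiniteDimensional ℝ E]
  [MeasurableSpace E] [BorelSpace E] [Nontrivial E] (μ : Measure E) [μ.IsAddHaarMeasure]

lemma addHaar_closedBall_rpow_two_div_finrank (x : E) {ρ : ℝ} (hρ : 0 ≤ ρ) :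
    μ (closedBall x ρ) ^ (2 / finrank ℝ E : ℝ)
      = ENNReal.ofReal (ρ ^ 2) * μ (closedBall 0 1) ^ (2 / finrank ℝ E : ℝ) := by
  have hn : (finrank ℝ E : ℝ) ≠ 0 := Nat.cast_ne_zero.2 finrank_pos.ne'
  rw [Measure.addHaar_closedBall' μ x hρ, ENNReal.mul_rpow_of_nonneg _ _ (by positivity),
    ENNReal.ofReal_rpow_of_nonneg (by positivity) (by positivity), ← rpow_natCast,
    ← rpow_mul hρ, mul_div_cancel₀ _ hn, rpow_two]

lemma addHaar_truncated_superlevel_rpow_le {x x₀ : E} {r R t s : ℝ} (hx : ‖x - x₀‖ < r)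
    (hrR : r ≤ R) (ht : 0 < t) (hs : 0 < s) :
    μ {y | R < ‖y - x₀‖ ∧ s ≤ exp (-‖x - y‖ ^ 2 / (4 * t))} ^ (2 / finrank ℝ E : ℝ)
      ≤ (Ioc 0 (exp (-(R - r) ^ 2 / (4 * t)))).indicator
          (fun s ↦ ENNReal.ofReal (4 * t * log s⁻¹)) s
        * μ (closedBall 0 1) ^ (2 / finrank ℝ E : ℝ) := by
  have hp : (0:ℝ) < 2 / finrank ℝ E := div_pos two_pos (Nat.cast_pos.2 finrank_pos)
  by_cases hsM : s ≤ exp (-(R - r) ^ 2 / (4 * t))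
  · have hlog : 0 ≤ 4 * t * log s⁻¹ := by
      have := log_nonneg ((one_le_inv₀ hs).2 (hsM.trans (exp_neg_sq_div_le_one _ ht.le)))
      positivity
    calc _ ≤ μ (closedBall x √(4 * t * log s⁻¹)) ^ (2 / finrank ℝ E : ℝ) :=
          ENNReal.rpow_le_rpow (measure_mono fun y hy ↦
            superlevel_exp_neg_sq_subset_closedBall x ht hs hy.2) hp.le
      _ = _ := by
        rw [addHaar_closedBall_rpow_two_div_finrank μ x (sqrt_nonneg _), sq_sqrt hlog,
          indicator_of_mem (show s ∈ Ioc _ _ from ⟨hs, hsM⟩)]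
  · have hempty : {y | R < ‖y - x₀‖ ∧ s ≤ exp (-‖x - y‖ ^ 2 / (4 * t))} = ∅ := by
      refine eq_empty_of_forall_notMem fun y ⟨hy, hys⟩ ↦ hsM ?_
      exact hys.trans (exp_neg_sq_div_lt_of_lt_norm_sub hx hrR hy ht).le
    simp [hempty, ENNReal.zero_rpow_of_pos hp]

theorem lintegral_addHaar_truncated_superlevel_rpow_le {x x₀ : E} {r R t : ℝ}
    (hx : ‖x - x₀‖ < r) (hrR : r ≤ R) (ht : 0 < t) :
    ∫⁻ s in Ioi 0,
        μ {y | R < ‖y - x₀‖ ∧ s ≤ exp (-‖x - y‖ ^ 2 / (4 * t))} ^ (2 / finrank ℝ E : ℝ)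
      ≤ ENNReal.ofReal (((R - r) ^ 2 + 4 * t) * exp (-(R - r) ^ 2 / (4 * t)))
        * μ (closedBall 0 1) ^ (2 / finrank ℝ E : ℝ) := by
  set M := exp (-(R - r) ^ 2 / (4 * t))
  set V := μ (closedBall (0 : E) 1) ^ (2 / finrank ℝ E : ℝ)
  have hV : V ≠ ⊤ := ENNReal.rpow_ne_top_of_nonneg (by positivity) measure_closedBall_lt_top.ne
  calc _ ≤ ∫⁻ s in Ioi 0, (Ioc 0 M).indicator (fun s ↦ ENNReal.ofReal (4 * t * log s⁻¹)) s * V :=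
        setLIntegral_mono' measurableSet_Ioi fun s hs ↦
          addHaar_truncated_superlevel_rpow_le μ hx hrR ht hs
    _ = ENNReal.ofReal (4 * t) * (∫⁻ s in Ioc 0 M, ENNReal.ofReal (log s⁻¹)) * V := by
      rw [lintegral_mul_const' _ _ hV, lintegral_indicator measurableSet_Ioc,
        Measure.restrict_restrict measurableSet_Ioc, inter_eq_left.2 Ioc_subset_Ioi_self]
      simp_rw [ENNReal.ofReal_mul (by positivity : 0 ≤ 4 * t)]
      rw [lintegral_const_mul' _ _ ENNReal.ofReal_ne_top]
    _ = _ := by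
      rw [lintegral_Ioc_ofReal_log_inv (exp_pos _).le (exp_neg_sq_div_le_one _ ht.le),
        ← ENNReal.ofReal_mul (by positivity), log_exp]
      congr 2
      unfold M
      field_simp
      ring

end AddHaar

theorem truncated_gaussian_L32_1_bound_general
    (x₀ : E3) (r R T : ℝ) (hrR : r < R) (hT : 0 < T) :
    ∃ C > 0, ∀ x ∈ ball x₀ r, ∀ t ∈ Ioc (0:ℝ) T,
      (∫⁻ s in Ioi (0:ℝ),
          (volume {y : E3 | R < ‖y - x₀‖ ∧ s ≤ Real.exp (-‖x - y‖^2 / (4*t))})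
            ^ ((2:ℝ)/3))
        ≤ ENNReal.ofReal (C * Real.exp (-(R - r)^2 / (4*t))) := by
  have hdim : (2 / finrank ℝ E3 : ℝ) = 2 / 3 := by simp
  set V := volume (closedBall (0 : E3) 1) ^ ((2:ℝ) / 3)
  have hV_top : V ≠ ⊤ := ENNReal.rpow_ne_top_of_nonneg (by positivity) measure_closedBall_lt_top.ne
  have hV : 0 < V.toReal := ENNReal.toReal_pos
    (ENNReal.rpow_pos (measure_closedBall_pos volume 0 one_pos) measure_closedBall_lt_top.ne).ne'
    hV_top
  refine ⟨V.toReal * ((R - r) ^ 2 + 4 * T), by positivity, fun x hx t ⟨ht, htT⟩ ↦ ?_⟩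
  calc _ ≤ ENNReal.ofReal (((R - r) ^ 2 + 4 * t) * exp (-(R - r) ^ 2 / (4 * t))) * V := by
        simpa only [hdim] using lintegral_addHaar_truncated_superlevel_rpow_le volume
          (mem_ball_iff_norm.1 hx) hrR.le ht
    _ ≤ ENNReal.ofReal (((R - r) ^ 2 + 4 * T) * exp (-(R - r) ^ 2 / (4 * t)))
          * ENNReal.ofReal V.toReal := by
      rw [ENNReal.ofReal_toReal hV_top]
      gcongr
    _ = _ := by
      rw [← ENNReal.ofReal_mul (by positivity)]
      ring_nf

/-- **Lemma 2.3 (Lorentz `L^{3/2,1}` bound for the truncated Gaussian).**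
For `0 < r < R` and `T > 0` there is `C = C(R,r,T)` such that for all `x ∈ B_r(x₀)` and
`t ∈ (0,T]`,
`∫₀^∞ (vol{y : ‖y-x₀‖ > R ∧ e^{-‖x-y‖²/(4t)} ≥ s})^{2/3} ds ≤ C e^{-(R-r)²/(4t)}`. -/
theorem truncated_gaussian_L32_1_bound
    (x₀ : E3) (r R T : ℝ) (hr : 0 < r) (hrR : r < R) (hT : 0 < T) :
    ∃ C > 0, ∀ x ∈ ball x₀ r, ∀ t ∈ Ioc (0:ℝ) T,
      (∫⁻ s in Ioi (0:ℝ),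
          (volume {y : E3 | R < ‖y - x₀‖ ∧ s ≤ Real.exp (-‖x - y‖^2 / (4*t))})
            ^ ((2:ℝ)/3))
        ≤ ENNReal.ofReal (C * Real.exp (-(R - r)^2 / (4*t))) :=
  truncated_gaussian_L32_1_bound_general x₀ r R T hrR hT
end
end

section
/- (Remark 2.5.) Let x₀ ∈ ℝ³, 0 < r < R < ∞, q ∈ (3,∞), and T > 0. Let u₀ ∈ L^{3,∞}(ℝ³;ℝ³) with the restriction of u₀ to B_R(x₀) in L^q(B_R(x₀)). Then there is a constant C, depending only on R, r, q, T, ‖u₀‖_{L^{3,∞}} and ‖u₀‖_{L^q(B_R(x₀))}, such that for all t ∈ (0,T), ess sup_{x ∈ B_r(x₀)} |(e^{tΔ}u₀)(x)| ≤ C t^{−3/(2q)}. -/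
open MeasureTheory Real Set Metric
open scoped ENNReal NNReal

noncomputable section

/-- The weak-`L³` quasinorm on `ℝ³`. -/
def wL3 {F : Type*} [NormedAddCommGroup F] (f : E3 → F) : ℝ≥0∞ :=
  ⨆ l : ℝ≥0, (l : ℝ≥0∞) * (volume {x : E3 | (l : ℝ) < ‖f x‖}) ^ ((3 : ℝ)⁻¹)

/-- The heat extension `e^{tΔ}u₀`. -/
def heat (t : ℝ) (u₀ : E3 → E3) (x : E3) : E3 :=
  ((4 * π * t) ^ (-(3 : ℝ)/2)) • ∫ y : E3, Real.exp (-‖x - y‖^2 / (4*t)) • u₀ y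

/-!
Split the heat integral at `B_R(x₀)`. On the ball, Hölder's inequality against the Gaussian,
whose `L^{q'}` norm is at most `(4πt)^{3/(2q')}`, gives `t^{-3/(2q)} ‖u₀‖_{L^q(B_R)}`.
Off the ball write `|u₀| ≤ 1 + |u₀| 1_{|u₀| > 1}`. The bounded part contributes at most `1`, the
mass of the heat kernel. The second part is integrable by the layer-cake formula, since
`|{|u₀| > λ}| ≤ ‖u₀‖_{L^{3,∞}}³ λ⁻³`, and against it the kernel is bounded uniformly in `t`
because `|x - y| ≥ R - r`. For `t < T` the bounded terms are absorbed into `(T/t)^{3/(2q)}`.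
-/

theorem volume_lt_norm_le_wL3 {F : Type*} [NormedAddCommGroup F] (f : E3 → F) {l : ℝ}
    (hl : 0 < l) : volume {x | l < ‖f x‖} ≤ wL3 f ^ 3 * ENNReal.ofReal (l ^ (-3 : ℝ)) := by
  have hsup : ENNReal.ofReal l * volume {x | l < ‖f x‖} ^ (3 : ℝ)⁻¹ ≤ wL3 f := by
    unfold wL3
    simpa [ENNReal.ofReal, hl.le] using le_iSup (fun l : ℝ≥0 =>
      (l : ℝ≥0∞) * volume {x : E3 | (l : ℝ) < ‖f x‖} ^ (3 : ℝ)⁻¹) l.toNNReal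
  have hl0 : ENNReal.ofReal l ≠ 0 := by simpa using hl
  rw [mul_comm, ← ENNReal.le_div_iff_mul_le (.inl hl0) (.inl ENNReal.ofReal_ne_top),
    ENNReal.rpow_inv_le_iff (by norm_num)] at hsup
  refine hsup.trans_eq ?_
  rw [Real.rpow_neg hl.le, ENNReal.ofReal_inv_of_pos (by positivity),
    ← ENNReal.ofReal_rpow_of_nonneg hl.le (by norm_num),
    ENNReal.div_rpow_of_nonneg _ _ (by norm_num), div_eq_mul_inv]
  norm_cast

theorem lintegral_indicator_one_lt_enorm_lt_top {F : Type*} [NormedAddCommGroup F] {f : E3 → F}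
    (hf : AEStronglyMeasurable f) (hw : wL3 f < ⊤) :
    ∫⁻ x, {x | 1 < ‖f x‖}.indicator (‖f ·‖ₑ) x < ⊤ := by
  set S := {x | 1 < ‖f x‖}
  set g : E3 → ℝ := S.indicator (‖f ·‖)
  have hg : AEMeasurable g :=
    hf.norm.aemeasurable.indicator₀ (nullMeasurableSet_lt aemeasurable_const hf.norm.aemeasurable)
  have hlayer := lintegral_eq_lintegral_meas_lt volume
    (ae_of_all _ fun x => indicator_nonneg (fun _ _ => norm_nonneg _) x) hg
  have hgS : ∀ t : ℝ, 0 ≤ t → {x | t < g x} ⊆ S := fun t ht x hx => by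
    by_contra hxS
    simp [g, hxS] at hx
    linarith
  have hgf : ∀ t : ℝ, {x | t < g x} ⊆ {x | t < ‖f x‖} := fun t x hx =>
    hx.out.trans_le (indicator_le_self' (fun _ _ => norm_nonneg _) x)
  have hw3 : wL3 f ^ 3 < ⊤ := ENNReal.pow_lt_top hw
  have hwS : volume S < ⊤ := (volume_lt_norm_le_wL3 f one_pos).trans_lt (by simpa using hw3)
  calc ∫⁻ x, S.indicator (‖f ·‖ₑ) x = ∫⁻ t in Ioi 0, volume {x | t < g x} := by
        rw [← hlayer]
        congr with x
        by_cases hx : x ∈ S <;> simp [hx]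
    _ ≤ (∫⁻ _ in Ioc (0 : ℝ) 1, volume S)
          + ∫⁻ t in Ioi 1, wL3 f ^ 3 * ENNReal.ofReal (t ^ (-3 : ℝ)) := by
        rw [← Ioc_union_Ioi_eq_Ioi zero_le_one]
        refine (lintegral_union_le _ _ _).trans ?_
        gcongr ?_ + ?_
        · exact setLIntegral_mono' measurableSet_Ioc fun t ht => measure_mono (hgS t ht.1.le)
        · exact setLIntegral_mono' measurableSet_Ioi fun t ht =>
            (measure_mono (hgf t)).trans (volume_lt_norm_le_wL3 f (zero_lt_one.trans ht))
    _ < ⊤ := by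
        have hint := (integrableOn_Ioi_rpow_of_lt (by norm_num : (-3 : ℝ) < -1) one_pos)
        rw [setLIntegral_const, lintegral_const_mul' _ _ hw3.ne]
        exact ENNReal.add_lt_top.2 ⟨ENNReal.mul_lt_top hwS measure_Ioc_lt_top,
          ENNReal.mul_lt_top hw3 hint.lintegral_lt_top⟩

theorem rpow_neg_mul_exp_neg_div_le {a p t : ℝ} (ha : 0 < a) (hp : 0 < p) (ht : 0 < t) :
    t ^ (-p) * exp (-a / t) ≤ (p / (a * exp 1)) ^ p := by
  have hbase : t⁻¹ * exp (-(a / p / t)) ≤ p / (a * exp 1) := by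
    have := mul_exp_neg_le_exp_neg_one (a / p / t)
    rw [exp_neg 1] at this
    calc t⁻¹ * exp (-(a / p / t)) = p / a * (a / p / t * exp (-(a / p / t))) := by
          field_simp
      _ ≤ p / a * (exp 1)⁻¹ := by gcongr
      _ = p / (a * exp 1) := by field_simp
  calc t ^ (-p) * exp (-a / t) = (t⁻¹ * exp (-(a / p / t))) ^ p := by
        rw [mul_rpow (by positivity) (by positivity), inv_rpow ht.le, rpow_neg ht.le, ← exp_mul]
        congr 2
        field_simp
    _ ≤ (p / (a * exp 1)) ^ p := rpow_le_rpow (by positivity) hbase hp.le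

theorem rpow_neg_three_halves_mul_rpow_le {p q t : ℝ} (hpq : p.HolderConjugate q) (ht : 0 < t) :
    (4 * π * t) ^ (-(3 : ℝ) / 2) * (4 * π * t) ^ (3 / (2 * p)) ≤ t ^ (-(3 / (2 * q))) := by
  have hexp : -(3 : ℝ) / 2 + 3 / (2 * p) = -(3 / (2 * q)) := by
    have := hpq.inv_add_inv_eq_one
    field_simp at this ⊢
    linarith
  rw [← rpow_add (by positivity), hexp]
  refine rpow_le_rpow_of_nonpos ht ?_ (neg_nonpos.2 (div_nonneg zero_le_three
    (mul_nonneg zero_le_two hpq.symm.nonneg)))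
  nlinarith [pi_gt_three]

theorem rpow_neg_three_halves_mul_exp_le {δ t : ℝ} (hδ : 0 < δ) (ht : 0 < t) :
    (4 * π * t) ^ (-(3 : ℝ) / 2) * exp (-δ ^ 2 / (4 * t)) ≤
      (3 / 2 / (π * δ ^ 2 * exp 1)) ^ (3 / 2 : ℝ) := by
  convert rpow_neg_mul_exp_neg_div_le (by positivity : 0 < π * δ ^ 2)
    (by norm_num : (0 : ℝ) < 3 / 2) (by positivity : 0 < 4 * π * t) using 3
  · ring
  · field_simp

theorem rpow_neg_mul_add_le_mul_rpow_neg {a b e t T : ℝ} (hb : 0 ≤ b) (he : 0 ≤ e) (ht : 0 < t)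
    (htT : t ≤ T) : t ^ (-e) * a + b ≤ (a + T ^ e * b) * t ^ (-e) := by
  have h1 : 1 ≤ T ^ e * t ^ (-e) := by
    rw [rpow_neg ht.le, ← div_eq_mul_inv, ← div_rpow (ht.le.trans htT) ht.le]
    exact one_le_rpow ((one_le_div ht).2 htT) he
  nlinarith

theorem lintegral_mul_enorm_le_mul_eLpNorm {α E : Type*} [MeasurableSpace α] {μ : Measure α}
    [NormedAddCommGroup E] {p q : ℝ} (hpq : p.HolderConjugate q) {f : α → ℝ≥0∞} {g : α → E}
    (hf : AEMeasurable f μ) (hg : AEStronglyMeasurable g μ) :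
    ∫⁻ a, f a * ‖g a‖ₑ ∂μ ≤ (∫⁻ a, f a ^ p ∂μ) ^ (1 / p) * eLpNorm g (ENNReal.ofReal q) μ := by
  rw [eLpNorm_eq_lintegral_rpow_enorm_toReal (by simpa using hpq.symm.pos) ENNReal.ofReal_ne_top,
    ENNReal.toReal_ofReal hpq.symm.nonneg]
  exact ENNReal.lintegral_mul_le_Lp_mul_Lq μ hpq hf hg.enorm

section Gaussian

variable {V F : Type*} [NormedAddCommGroup V] [InnerProductSpace ℝ V] [FiniteDimensional ℝ V]
  [MeasurableSpace V] [BorelSpace V] [NormedAddCommGroup F]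

theorem lintegral_exp_neg_norm_sub_sq_div (x : V) {s : ℝ} (hs : 0 < s) :
    ∫⁻ y, ENNReal.ofReal (exp (-‖x - y‖ ^ 2 / s)) =
      ENNReal.ofReal ((π * s) ^ (Module.finrank ℝ V / 2 : ℝ)) := by
  have hform : ∀ z : V, -‖z‖ ^ 2 / s = -s⁻¹ * ‖z‖ ^ 2 := fun z => by ring
  have hval := GaussianFourier.integral_rexp_neg_mul_sq_norm (V := V) (inv_pos.2 hs)
  rw [div_inv_eq_mul] at hval
  have hint : Integrable fun z : V => exp (-s⁻¹ * ‖z‖ ^ 2) :=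
    .of_integral_ne_zero (by rw [hval]; positivity)
  rw [lintegral_sub_left_eq_self (fun z => ENNReal.ofReal (exp (-‖z‖ ^ 2 / s))) x]
  simp_rw [hform]
  rw [← ofReal_integral_eq_lintegral_ofReal hint (ae_of_all _ fun _ => (exp_pos _).le), hval]

theorem lintegral_exp_neg_norm_sub_sq_div_rpow_le (x : V) {s p : ℝ} (hs : 0 < s) (hp : 1 ≤ p) :
    (∫⁻ y, ENNReal.ofReal (exp (-‖x - y‖ ^ 2 / s)) ^ p) ^ (1 / p) ≤
      ENNReal.ofReal ((π * s) ^ (Module.finrank ℝ V / (2 * p) : ℝ)) := by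
  have hp0 : 0 < p := zero_lt_one.trans_le hp
  have hpow : ∀ y : V, ENNReal.ofReal (exp (-‖x - y‖ ^ 2 / s)) ^ p =
      ENNReal.ofReal (exp (-‖x - y‖ ^ 2 / (s / p))) := fun y => by
    rw [ENNReal.ofReal_rpow_of_nonneg (exp_pos _).le hp0.le, ← exp_mul]
    congr 2
    field_simp
  simp_rw [hpow]
  rw [lintegral_exp_neg_norm_sub_sq_div x (div_pos hs hp0),
    ENNReal.ofReal_rpow_of_nonneg (by positivity) (by positivity), ← rpow_mul (by positivity)]
  refine ENNReal.ofReal_le_ofReal ?_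
  calc (π * (s / p)) ^ (Module.finrank ℝ V / 2 * (1 / p) : ℝ)
      ≤ (π * s) ^ (Module.finrank ℝ V / 2 * (1 / p) : ℝ) := by
        gcongr
        exact div_le_self hs.le hp
    _ = (π * s) ^ (Module.finrank ℝ V / (2 * p) : ℝ) := by
        congr 1
        field_simp

theorem setLIntegral_exp_neg_norm_sub_sq_div_mul_enorm_le {u : V → F} {A : Set V}
    (hu : AEStronglyMeasurable u (volume.restrict A)) (x : V) {s p q : ℝ} (hs : 0 < s)
    (hpq : p.HolderConjugate q) :
    ∫⁻ y in A, ENNReal.ofReal (exp (-‖x - y‖ ^ 2 / s)) * ‖u y‖ₑ ≤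
      ENNReal.ofReal ((π * s) ^ (Module.finrank ℝ V / (2 * p) : ℝ)) *
        eLpNorm u (ENNReal.ofReal q) (volume.restrict A) := by
  have hG : Measurable fun y : V => ENNReal.ofReal (exp (-‖x - y‖ ^ 2 / s)) := by fun_prop
  refine (lintegral_mul_enorm_le_mul_eLpNorm hpq hG.aemeasurable hu).trans ?_
  gcongr
  calc (∫⁻ y in A, ENNReal.ofReal (exp (-‖x - y‖ ^ 2 / s)) ^ p) ^ (1 / p)
      ≤ (∫⁻ y, ENNReal.ofReal (exp (-‖x - y‖ ^ 2 / s)) ^ p) ^ (1 / p) := by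
        exact ENNReal.rpow_le_rpow (setLIntegral_le_lintegral _ _) (one_div_nonneg.2 hpq.nonneg)
    _ ≤ _ := lintegral_exp_neg_norm_sub_sq_div_rpow_le x hs hpq.lt.le

theorem setLIntegral_exp_neg_norm_sub_sq_div_mul_enorm_le_of_le_dist {u : V → F} {A : Set V}
    (hA : MeasurableSet A) {x : V} {s δ : ℝ} (hs : 0 < s) (hδ : 0 ≤ δ)
    (hxA : ∀ y ∈ A, δ ≤ ‖x - y‖) :
    ∫⁻ y in A, ENNReal.ofReal (exp (-‖x - y‖ ^ 2 / s)) * ‖u y‖ₑ ≤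
      ENNReal.ofReal ((π * s) ^ (Module.finrank ℝ V / 2 : ℝ)) +
        ENNReal.ofReal (exp (-δ ^ 2 / s)) * ∫⁻ y, {y | 1 < ‖u y‖}.indicator (‖u ·‖ₑ) y := by
  set G := fun y : V => ENNReal.ofReal (exp (-‖x - y‖ ^ 2 / s))
  set g := {y | 1 < ‖u y‖}.indicator (‖u ·‖ₑ)
  have hG : Measurable G := by fun_prop
  have hsplit : ∀ y, ‖u y‖ₑ ≤ 1 + g y := fun y => by
    by_cases hy : 1 < ‖u y‖
    · simp [g, hy]
    · exact le_add_right (by simpa [g, hy, ← ofReal_norm] using not_lt.1 hy)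
  calc ∫⁻ y in A, G y * ‖u y‖ₑ ≤ ∫⁻ y in A, (G y + G y * g y) := by
        refine lintegral_mono fun y => ?_
        rw [← mul_one_add]
        gcongr
        exact hsplit y
    _ = (∫⁻ y in A, G y) + ∫⁻ y in A, G y * g y := lintegral_add_left hG _
    _ ≤ (∫⁻ y, G y) + ∫⁻ y in A, ENNReal.ofReal (exp (-δ ^ 2 / s)) * g y := by
        gcongr ?_ + ?_
        · exact setLIntegral_le_lintegral _ _
        · refine setLIntegral_mono' hA fun y hy => ?_
          gcongr
          exact ENNReal.ofReal_le_ofReal <| exp_le_exp.2 <|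
            div_le_div_of_nonneg_right (neg_le_neg (pow_le_pow_left₀ hδ (hxA y hy) 2)) hs.le
    _ ≤ _ := by
        rw [lintegral_exp_neg_norm_sub_sq_div x hs, lintegral_const_mul' _ _ ENNReal.ofReal_ne_top]
        gcongr
        exact Measure.restrict_le_self

end Gaussian

theorem enorm_heat_le {t : ℝ} (ht : 0 ≤ t) (u₀ : E3 → E3) (x : E3) :
    ‖heat t u₀ x‖ₑ ≤ ENNReal.ofReal ((4 * π * t) ^ (-(3 : ℝ) / 2)) *
      ∫⁻ y, ENNReal.ofReal (exp (-‖x - y‖ ^ 2 / (4 * t))) * ‖u₀ y‖ₑ := by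
  rw [heat, enorm_smul, Real.enorm_of_nonneg (by positivity)]
  gcongr
  refine (enorm_integral_le_lintegral_enorm _).trans_eq ?_
  simp_rw [enorm_smul, Real.enorm_of_nonneg (exp_pos _).le]

/-- Junk value: `heat` is a Bochner integral, which is `0` when the integrand is not integrable. -/
theorem heat_eq_zero_of_not_aestronglyMeasurable {u₀ : E3 → E3} (hu : ¬AEStronglyMeasurable u₀)
    (t : ℝ) (x : E3) : heat t u₀ x = 0 := by
  have hG : Continuous fun y : E3 => (exp (-‖x - y‖ ^ 2 / (4 * t)))⁻¹ :=
    (by fun_prop : Continuous fun y : E3 => exp (-‖x - y‖ ^ 2 / (4 * t))).inv₀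
      fun _ => (exp_pos _).ne'
  have hu₀ : u₀ = fun y => (exp (-‖x - y‖ ^ 2 / (4 * t)))⁻¹ •
      exp (-‖x - y‖ ^ 2 / (4 * t)) • u₀ y := by
    funext y
    rw [smul_smul, inv_mul_cancel₀ (exp_pos _).ne', one_smul]
  have : ¬Integrable fun y => exp (-‖x - y‖ ^ 2 / (4 * t)) • u₀ y := fun hi =>
    hu (hu₀ ▸ hG.aestronglyMeasurable.smul hi.1)
  rw [heat, integral_undef this, smul_zero]

theorem enorm_heat_le_of_mem_ball {x₀ x : E3} {r R : ℝ} (hx : x ∈ ball x₀ r) (hrR : r < R)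
    {p q : ℝ} (hpq : p.HolderConjugate q) {t : ℝ} (ht : 0 < t) {u₀ : E3 → E3}
    (hu : AEStronglyMeasurable u₀) :
    ‖heat t u₀ x‖ₑ ≤
      ENNReal.ofReal (t ^ (-(3 / (2 * q)))) *
          eLpNorm u₀ (ENNReal.ofReal q) (volume.restrict (ball x₀ R)) + 1 +
        ENNReal.ofReal ((3 / 2 / (π * (R - r) ^ 2 * exp 1)) ^ (3 / 2 : ℝ)) *
          ∫⁻ y, {y | 1 < ‖u₀ y‖}.indicator (‖u₀ ·‖ₑ) y := by
  have hdist : ∀ y ∈ (ball x₀ R)ᶜ, R - r ≤ ‖x - y‖ := fun y hy => by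
    rw [mem_compl_iff, mem_ball, not_lt] at hy
    rw [← dist_eq_norm, dist_comm]
    linarith [dist_triangle y x x₀, mem_ball.1 hx]
  have h4t : 0 < 4 * t := by positivity
  have hnear := setLIntegral_exp_neg_norm_sub_sq_div_mul_enorm_le
    (hu.restrict (s := ball x₀ R)) x h4t hpq
  have hfar := setLIntegral_exp_neg_norm_sub_sq_div_mul_enorm_le_of_le_dist
    measurableSet_ball.compl h4t (sub_pos.2 hrR).le hdist (u := u₀)
  rw [finrank_euclideanSpace_fin, Nat.cast_ofNat, show π * (4 * t) = 4 * π * t by ring]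
    at hnear hfar
  set A := eLpNorm u₀ (ENNReal.ofReal q) (volume.restrict (ball x₀ R))
  set L := ∫⁻ y, {y | 1 < ‖u₀ y‖}.indicator (‖u₀ ·‖ₑ) y
  set c := (4 * π * t) ^ (-(3 : ℝ) / 2)
  have hc : 0 ≤ c := by positivity
  have hone : c * (4 * π * t) ^ (3 / 2 : ℝ) = 1 := by
    rw [← rpow_add (by positivity)]
    norm_num
  calc ‖heat t u₀ x‖ₑ
      ≤ ENNReal.ofReal c * (ENNReal.ofReal ((4 * π * t) ^ (3 / (2 * p))) * A +
          (ENNReal.ofReal ((4 * π * t) ^ (3 / 2 : ℝ)) +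
            ENNReal.ofReal (exp (-(R - r) ^ 2 / (4 * t))) * L)) := by
        refine (enorm_heat_le ht.le u₀ x).trans ?_
        rw [← lintegral_add_compl _ measurableSet_ball]
        gcongr
    _ = ENNReal.ofReal (c * (4 * π * t) ^ (3 / (2 * p))) * A +
          ENNReal.ofReal (c * (4 * π * t) ^ (3 / 2 : ℝ)) +
          ENNReal.ofReal (c * exp (-(R - r) ^ 2 / (4 * t))) * L := by
        simp only [ENNReal.ofReal_mul hc]
        ring
    _ ≤ _ := by
        rw [hone, ENNReal.ofReal_one]
        gcongr
        · exact rpow_neg_three_halves_mul_rpow_le hpq ht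
        · exact rpow_neg_three_halves_mul_exp_le (sub_pos.2 hrR) ht

theorem heat_extension_local_Linfty_bound_general
    (x₀ : E3) (r R : ℝ) (hrR : r < R) (q : ℝ) (hq : 3 < q)
    (T : ℝ) (hT : 0 < T)
    (u₀ : E3 → E3) (hu₀ : wL3 u₀ < ⊤)
    (hLq : eLpNorm u₀ (ENNReal.ofReal q) (volume.restrict (ball x₀ R)) < ⊤) :
    ∃ C > 0, ∀ t ∈ Ioo (0:ℝ) T,
      eLpNorm (heat t u₀) ⊤ (volume.restrict (ball x₀ r))
        ≤ ENNReal.ofReal (C * t ^ (-(3/(2*q)))) := by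
  by_cases hu : AEStronglyMeasurable u₀
  swap
  · refine ⟨1, one_pos, fun t _ => ?_⟩
    rw [funext (heat_eq_zero_of_not_aestronglyMeasurable hu t), eLpNorm_zero']
    exact zero_le
  set A := eLpNorm u₀ (ENNReal.ofReal q) (volume.restrict (ball x₀ R))
  set L := ∫⁻ y, {y | 1 < ‖u₀ y‖}.indicator (‖u₀ ·‖ₑ) y
  set K := (3 / 2 / (π * (R - r) ^ 2 * exp 1)) ^ (3 / 2 : ℝ)
  have hL : L ≠ ⊤ := (lintegral_indicator_one_lt_enorm_lt_top hu hu₀).ne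
  have hpq := (Real.HolderConjugate.conjExponent (by linarith : 1 < q)).symm
  refine ⟨A.toReal + T ^ (3 / (2 * q)) * (1 + K * L.toReal), by positivity,
    fun t ⟨ht0, htT⟩ => ?_⟩
  rw [eLpNorm_exponent_top]
  refine eLpNormEssSup_le_of_ae_enorm_bound <|
    (ae_restrict_iff' measurableSet_ball).2 <| ae_of_all _ fun x hx => ?_
  calc ‖heat t u₀ x‖ₑ ≤ _ := enorm_heat_le_of_mem_ball hx hrR hpq ht0 hu
    _ = ENNReal.ofReal (t ^ (-(3 / (2 * q))) * A.toReal + (1 + K * L.toReal)) := by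
        rw [ENNReal.ofReal_add (by positivity) (by positivity),
          ENNReal.ofReal_add zero_le_one (by positivity), ENNReal.ofReal_mul (by positivity),
          ENNReal.ofReal_mul (by positivity), ENNReal.ofReal_toReal hLq.ne,
          ENNReal.ofReal_toReal hL, ENNReal.ofReal_one, add_assoc]
    _ ≤ _ := ENNReal.ofReal_le_ofReal <|
        rpow_neg_mul_add_le_mul_rpow_neg (by positivity) (by positivity) ht0 htT.le

/-- **Remark 2.5.**
For `0 < r < R`, `q ∈ (3,∞)`, `T > 0`, and `u₀ ∈ L^{3,∞}` with `u₀|_{B_R(x₀)} ∈ L^q`,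
`ess sup_{x ∈ B_r(x₀)} |(e^{tΔ}u₀)(x)| ≤ C t^{-3/(2q)}` for all `t ∈ (0,T)`. -/
theorem heat_extension_local_Linfty_bound
    (x₀ : E3) (r R : ℝ) (hr : 0 < r) (hrR : r < R) (q : ℝ) (hq : 3 < q)
    (T : ℝ) (hT : 0 < T)
    (u₀ : E3 → E3) (hu₀ : wL3 u₀ < ⊤)
    (hLq : eLpNorm u₀ (ENNReal.ofReal q) (volume.restrict (ball x₀ R)) < ⊤) :
    ∃ C > 0, ∀ t ∈ Ioo (0:ℝ) T,
      eLpNorm (heat t u₀) ⊤ (volume.restrict (ball x₀ r))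
        ≤ ENNReal.ofReal (C * t ^ (-(3/(2*q)))) :=
  heat_extension_local_Linfty_bound_general x₀ r R hrR q hq T hT u₀ hu₀ hLq
end
end

section
/- (Far-field Gaussian tail estimate against weak-L³ data; the estimate (A1)–(A2) / I₃₂ in the paper.) Let x₀ ∈ ℝ³, 0 < r < R < ∞, and T > 0. Then there is a constant C = C(R,r,T) such that for every u₀ ∈ L^{3,∞}(ℝ³;ℝ³), every x ∈ B_r(x₀), and every t ∈ (0,T], ∫_{{y : ‖y−x₀‖ ≥ R}} t^{−3/2} e^{−‖x−y‖²/(4t)} |u₀(y)| dy ≤ C ‖u₀‖_{L^{3,∞}} t^{−3/2} e^{−(R−r)²/(4t)}. -/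
/-!
For `‖x - x₀‖ < r ≤ R ≤ ‖y - x₀‖` the distance `‖x - y‖ ≥ ‖y - x₀‖ - r` splits at `R` into two
nonnegative pieces, so the heat kernel factors as
`exp (-‖x - y‖² / 4t) ≤ exp (-(R - r)² / 4t) · exp (-(‖y - x₀‖ - R)² / 4T)` for `t ≤ T`.
It remains to bound `∫_{‖y - x₀‖ ≥ R} exp (-(‖y - x₀‖ - R)² / 4T) |u₀|` by `C ‖u₀‖_{L^{3,∞}}`.
Cut the far field into unit shells; on the `n`-th shell the weight is at most `exp (-n² / 4T)`,
and a dyadic layer decomposition of `|u₀|` at height `M = ‖u₀‖_{L^{3,∞}}` gives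
`∫_A |u₀| ≤ M (|A| + 8/3)`. The shell volumes grow like `n³`, which the Gaussian decay sums.
-/

open MeasureTheory Real Set Metric
open scoped ENNReal NNReal

noncomputable section

open Filter Topology

/-- `‖f‖_{L^{3,∞}(μ)} ≤ M`, written through the distribution function. -/
def HasWeakL3Bound {α F : Type*} [MeasurableSpace α] [NormedAddCommGroup F] (μ : Measure α)
    (f : α → F) (M : ℝ) : Prop :=
  ∀ c > 0, μ {x | c < ‖f x‖} ≤ ENNReal.ofReal ((M / c) ^ 3)

lemma ofReal_le_add_tsum_indicator_dyadic {α : Type*} {g : α → ℝ} {S : ℕ → Set α} {l : ℝ}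
    (hl : 0 < l) (hS : ∀ j, {x | l * 2 ^ j < g x} ⊆ S j) (x : α) :
    ENNReal.ofReal (g x) ≤
      ENNReal.ofReal l + ∑' j, (S j).indicator (fun _ ↦ ENNReal.ofReal (l * 2 ^ (j + 1))) x := by
  have key : ∀ n : ℕ, g x ≤ l * 2 ^ n → ENNReal.ofReal (g x) ≤
      ENNReal.ofReal l + ∑ j ∈ Finset.range n,
        (S j).indicator (fun _ ↦ ENNReal.ofReal (l * 2 ^ (j + 1))) x := by
    intro n
    induction n with
    | zero => simpa using ENNReal.ofReal_le_ofReal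
    | succ n ih =>
      intro hn
      rw [Finset.sum_range_succ, ← add_assoc]
      by_cases hx : g x ≤ l * 2 ^ n
      · exact (ih hx).trans le_self_add
      · rw [indicator_of_mem (hS n (not_le.1 hx))]
        exact (ENNReal.ofReal_le_ofReal hn).trans le_add_self
  obtain ⟨n, hn⟩ := pow_unbounded_of_one_lt (g x / l) one_lt_two
  refine (key n ((div_lt_iff₀' hl).1 hn).le).trans ?_
  gcongr
  exact ENNReal.sum_le_tsum _

namespace HasWeakL3Bound

variable {α F : Type*} [MeasurableSpace α] [NormedAddCommGroup F] {μ : Measure α} {f : α → F}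
  {M : ℝ}

lemma setLIntegral_enorm_le_add (hf : HasWeakL3Bound μ f M) (hM : 0 ≤ M) (A : Set α) {l : ℝ}
    (hl : 0 < l) :
    ∫⁻ x in A, ‖f x‖ₑ ∂μ ≤ ENNReal.ofReal l * μ A + ENNReal.ofReal (8 / 3 * M ^ 3 / l ^ 2) := by
  -- `f` need not be measurable: pass to measurable hulls of its level sets
  set S := fun j : ℕ ↦ toMeasurable μ {x | l * 2 ^ j < ‖f x‖}
  have hS : ∀ j, MeasurableSet (S j) := fun j ↦ measurableSet_toMeasurable _ _
  have geom : ∑' j : ℕ, ENNReal.ofReal (l * 2 ^ (j + 1)) *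
      ENNReal.ofReal ((M / (l * 2 ^ j)) ^ 3) = ENNReal.ofReal (8 / 3 * M ^ 3 / l ^ 2) := by
    have hterm : ∀ j : ℕ,
        l * 2 ^ (j + 1) * (M / (l * 2 ^ j)) ^ 3 = 2 * M ^ 3 / l ^ 2 * (1 / 4) ^ j := by
      intro j
      have h4 : (4 : ℝ) ^ j = 2 ^ j * 2 ^ j := by rw [← mul_pow]; norm_num
      rw [one_div_pow, h4]
      field_simp
      ring
    rw [tsum_congr fun j ↦ by rw [← ENNReal.ofReal_mul (by positivity), hterm],
      ← ENNReal.ofReal_tsum_of_nonneg (fun j ↦ by positivity)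
      ((summable_geometric_of_lt_one (by norm_num) (by norm_num)).mul_left _),
      tsum_mul_left, tsum_geometric_of_lt_one (by norm_num) (by norm_num)]
    ring_nf
  calc ∫⁻ x in A, ‖f x‖ₑ ∂μ
      ≤ ∫⁻ x in A, ENNReal.ofReal l +
          ∑' j, (S j).indicator (fun _ ↦ ENNReal.ofReal (l * 2 ^ (j + 1))) x ∂μ :=
        lintegral_mono fun x ↦ by
          rw [← ofReal_norm]
          exact ofReal_le_add_tsum_indicator_dyadic (g := (‖f ·‖)) hl
            (fun j ↦ subset_toMeasurable _ _) x
    _ = ENNReal.ofReal l * μ A +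
          ∑' j, ENNReal.ofReal (l * 2 ^ (j + 1)) * μ.restrict A (S j) := by
        rw [lintegral_add_left measurable_const, setLIntegral_const,
          lintegral_tsum fun j ↦ (measurable_const.indicator (hS j)).aemeasurable]
        simp_rw [lintegral_indicator_const (hS _)]
    _ ≤ ENNReal.ofReal l * μ A + ∑' j : ℕ, ENNReal.ofReal (l * 2 ^ (j + 1)) *
          ENNReal.ofReal ((M / (l * 2 ^ j)) ^ 3) := by
        gcongr with j
        calc μ.restrict A (S j) ≤ μ (S j) := Measure.restrict_apply_le _ _
          _ = μ {x | l * 2 ^ j < ‖f x‖} := measure_toMeasurable _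
          _ ≤ _ := hf _ (by positivity)
    _ = _ := by rw [geom]

lemma setLIntegral_enorm_le (hf : HasWeakL3Bound μ f M) (hM : 0 ≤ M) {A : Set α}
    (hA : μ A ≠ ∞) :
    ∫⁻ x in A, ‖f x‖ₑ ∂μ ≤ ENNReal.ofReal M * (μ A + 8 / 3) := by
  obtain rfl | hM := hM.eq_or_lt
  · have hlim : Tendsto (fun l ↦ ENNReal.ofReal l * μ A) (𝓝[>] 0) (𝓝 0) := by
      simpa using ENNReal.Tendsto.mul_const
        ((ENNReal.continuous_ofReal.tendsto 0).mono_left nhdsWithin_le_nhds) (Or.inr hA)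
    refine (ge_of_tendsto hlim (eventually_nhdsWithin_of_forall fun l hl ↦ ?_)).trans (by simp)
    simpa using hf.setLIntegral_enorm_le_add le_rfl A hl
  · calc ∫⁻ x in A, ‖f x‖ₑ ∂μ
        ≤ ENNReal.ofReal M * μ A + ENNReal.ofReal (8 / 3 * M ^ 3 / M ^ 2) :=
          hf.setLIntegral_enorm_le_add hM.le A hM
      _ = ENNReal.ofReal M * (μ A + 8 / 3) := by
          rw [show 8 / 3 * M ^ 3 / M ^ 2 = M * (8 / 3) by field_simp, ENNReal.ofReal_mul hM.le,
            mul_add, ENNReal.ofReal_div_of_pos three_pos]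
          norm_num

end HasWeakL3Bound

lemma hasWeakL3Bound_wL3 {F : Type*} [NormedAddCommGroup F] {f : E3 → F} (hf : wL3 f ≠ ∞) :
    HasWeakL3Bound volume f (wL3 f).toReal := fun c hc ↦ by
  have hle : ENNReal.ofReal c * volume {x | c < ‖f x‖} ^ (3 : ℝ)⁻¹ ≤ wL3 f := by
    have h := le_iSup (fun l : ℝ≥0 ↦
      (l : ℝ≥0∞) * volume {x : E3 | (l : ℝ) < ‖f x‖} ^ (3 : ℝ)⁻¹) c.toNNReal
    rwa [c.coe_toNNReal hc.le] at h
  have hroot : volume {x | c < ‖f x‖} ^ (3 : ℝ)⁻¹ ≤ ENNReal.ofReal ((wL3 f).toReal / c) := by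
    rwa [ENNReal.ofReal_div_of_pos hc, ENNReal.ofReal_toReal hf,
      ENNReal.le_div_iff_mul_le (.inl (by simpa using hc)) (by simp), mul_comm]
  calc volume {x | c < ‖f x‖} = (volume {x | c < ‖f x‖} ^ (3 : ℝ)⁻¹) ^ 3 := by
        rw [← ENNReal.rpow_natCast, ← ENNReal.rpow_mul]
        norm_num
    _ ≤ ENNReal.ofReal ((wL3 f).toReal / c) ^ 3 := by gcongr
    _ = _ := (ENNReal.ofReal_pow (by positivity) 3).symm

lemma exp_neg_sq_div_le_mul_exp {E : Type*} [SeminormedAddCommGroup E] {x y x₀ : E}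
    {r R t T : ℝ} (hrR : r ≤ R) (ht : 0 < t) (htT : t ≤ T) (hx : ‖x - x₀‖ ≤ r)
    (hy : R ≤ ‖y - x₀‖) :
    exp (-‖x - y‖ ^ 2 / (4 * t)) ≤
      exp (-(R - r) ^ 2 / (4 * t)) * exp (-(‖y - x₀‖ - R) ^ 2 / (4 * T)) := by
  have hxy : ‖y - x₀‖ - r ≤ ‖x - y‖ := by
    have := norm_sub_le_norm_sub_add_norm_sub y x x₀
    rw [norm_sub_rev y x] at this
    linarith
  have hsq : (R - r) ^ 2 + (‖y - x₀‖ - R) ^ 2 ≤ ‖x - y‖ ^ 2 := by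
    nlinarith [mul_nonneg (sub_nonneg.2 hy) (sub_nonneg.2 hrR)]
  have hT : (‖y - x₀‖ - R) ^ 2 / (4 * T) ≤ (‖y - x₀‖ - R) ^ 2 / (4 * t) := by
    gcongr
  rw [← exp_add, exp_le_exp, neg_div, neg_div, neg_div]
  have : ((R - r) ^ 2 + (‖y - x₀‖ - R) ^ 2) / (4 * t) ≤ ‖x - y‖ ^ 2 / (4 * t) := by gcongr
  rw [add_div] at this
  linarith

lemma ofReal_mul_exp_mul_norm_le {E F : Type*} [SeminormedAddCommGroup E]
    [SeminormedAddCommGroup F] {x y x₀ : E} {v : F} {a r R t T : ℝ} (ha : 0 ≤ a) (hrR : r ≤ R)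
    (ht : 0 < t) (htT : t ≤ T) (hx : ‖x - x₀‖ ≤ r) (hy : R ≤ ‖y - x₀‖) :
    ENNReal.ofReal (a * exp (-‖x - y‖ ^ 2 / (4 * t)) * ‖v‖) ≤
      ENNReal.ofReal (a * exp (-(R - r) ^ 2 / (4 * t))) *
        (ENNReal.ofReal (exp (-(‖y - x₀‖ - R) ^ 2 / (4 * T))) * ‖v‖ₑ) := by
  rw [← ofReal_norm, ← ENNReal.ofReal_mul (exp_nonneg _), ← ENNReal.ofReal_mul (by positivity)]
  refine ENNReal.ofReal_le_ofReal ?_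
  calc a * exp (-‖x - y‖ ^ 2 / (4 * t)) * ‖v‖
      ≤ a * (exp (-(R - r) ^ 2 / (4 * t)) * exp (-(‖y - x₀‖ - R) ^ 2 / (4 * T))) * ‖v‖ := by
        gcongr
        exact exp_neg_sq_div_le_mul_exp hrR ht htT hx hy
    _ = a * exp (-(R - r) ^ 2 / (4 * t)) * (exp (-(‖y - x₀‖ - R) ^ 2 / (4 * T)) * ‖v‖) := by
        ring

lemma summable_exp_neg_sq_div_mul_pow {c b : ℝ} (hc : 0 < c) (hb : 0 ≤ b) (k : ℕ) :
    Summable fun n : ℕ ↦ exp (-n ^ 2 / c) * (b + n) ^ k := by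
  have hshift : Summable fun n : ℕ ↦ ((n : ℝ) + 1) ^ k * exp (-(1 / c) * ((n : ℝ) + 1)) := by
    simpa using (summable_nat_add_iff 1).2 (summable_pow_mul_exp_neg_nat_mul k (one_div_pos.2 hc))
  refine .of_nonneg_of_le (fun n ↦ by positivity) (fun n ↦ ?_)
    (hshift.mul_left ((b + 1) ^ k * exp (1 / c)))
  have hexp : exp (-n ^ 2 / c) ≤ exp (1 / c) * exp (-(1 / c) * ((n : ℝ) + 1)) := by
    rw [← exp_add, exp_le_exp]
    have : (n : ℝ) ≤ n ^ 2 := by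
      rcases Nat.eq_zero_or_pos n with rfl | hn
      · simp
      · nlinarith [(Nat.one_le_cast (α := ℝ)).2 hn]
    field_simp
    linarith
  have hpow : (b + n) ^ k ≤ (b + 1) ^ k * ((n : ℝ) + 1) ^ k := by
    rw [← mul_pow]
    gcongr
    nlinarith [mul_nonneg hb (Nat.cast_nonneg (α := ℝ) n)]
  calc exp (-n ^ 2 / c) * (b + n) ^ k
      ≤ (exp (1 / c) * exp (-(1 / c) * ((n : ℝ) + 1))) * ((b + 1) ^ k * ((n : ℝ) + 1) ^ k) := by
        gcongr
    _ = _ := by ring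

lemma setLIntegral_mul_le_tsum_of_subset_iUnion {α : Type*} [MeasurableSpace α] {μ : Measure α}
    {S : Set α} {A : ℕ → Set α} (hS : S ⊆ ⋃ n, A n) (hA : ∀ n, MeasurableSet (A n))
    {w g : α → ℝ≥0∞} {a : ℕ → ℝ≥0∞} (ha : ∀ n, a n ≠ ∞) (hw : ∀ n, ∀ x ∈ A n, w x ≤ a n) :
    ∫⁻ x in S, w x * g x ∂μ ≤ ∑' n, a n * ∫⁻ x in A n, g x ∂μ :=
  calc ∫⁻ x in S, w x * g x ∂μ ≤ ∫⁻ x in ⋃ n, A n, w x * g x ∂μ := lintegral_mono_set hS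
    _ ≤ ∑' n, ∫⁻ x in A n, w x * g x ∂μ := lintegral_iUnion_le _ _
    _ ≤ ∑' n, ∫⁻ x in A n, a n * g x ∂μ := ENNReal.tsum_le_tsum fun n ↦
        setLIntegral_mono' (hA n) fun x hx ↦ by gcongr; exact hw n x hx
    _ = ∑' n, a n * ∫⁻ x in A n, g x ∂μ := by simp_rw [lintegral_const_mul' _ _ (ha _)]

/-- A sum over the shells `R + n ≤ ‖y - x₀‖ < R + n + 1`: there the Gaussian weight is at most
`exp (-n ^ 2 / (4 * T))`, the shell lies in a ball of volume `(R + n + 1) ^ 3 * |B₁|`, and `8 / 3`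
is the constant of `HasWeakL3Bound.setLIntegral_enorm_le`. -/
def farFieldConst (R T : ℝ) : ℝ :=
  ∑' n : ℕ, exp (-n ^ 2 / (4 * T)) *
    ((R + n + 1) ^ 3 * (volume (ball (0 : E3) 1)).toReal + 8 / 3)

section FarField

variable {R T : ℝ}

lemma summable_farFieldConst (hR : 0 ≤ R) (hT : 0 < T) :
    Summable fun n : ℕ ↦ exp (-n ^ 2 / (4 * T)) *
      ((R + n + 1) ^ 3 * (volume (ball (0 : E3) 1)).toReal + 8 / 3) := by
  have h3 := summable_exp_neg_sq_div_mul_pow (by positivity : 0 < 4 * T)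
    (by positivity : 0 ≤ R + 1) 3
  have h0 := summable_exp_neg_sq_div_mul_pow (by positivity : 0 < 4 * T)
    (by positivity : 0 ≤ R + 1) 0
  refine ((h3.mul_right (volume (ball (0 : E3) 1)).toReal).add (h0.mul_right (8 / 3))).congr
    fun n ↦ ?_
  ring

lemma farFieldConst_pos (hR : 0 ≤ R) (hT : 0 < T) : 0 < farFieldConst R T :=
  (summable_farFieldConst hR hT).tsum_pos (fun n ↦ by positivity) 0 (by positivity)

lemma HasWeakL3Bound.setLIntegral_exp_mul_enorm_le {F : Type*} [NormedAddCommGroup F]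
    {f : E3 → F} {M : ℝ} (hf : HasWeakL3Bound volume f M) (hM : 0 ≤ M) (x₀ : E3) (hR : 0 ≤ R)
    (hT : 0 < T) :
    ∫⁻ y in {y | R ≤ ‖y - x₀‖}, ENNReal.ofReal (exp (-(‖y - x₀‖ - R) ^ 2 / (4 * T))) * ‖f y‖ₑ
      ≤ ENNReal.ofReal (M * farFieldConst R T) := by
  set v := (volume (ball (0 : E3) 1)).toReal
  set A : ℕ → Set E3 := fun n ↦ (‖· - x₀‖) ⁻¹' Ico (R + n) (R + n + 1)
  have hA : ∀ n, MeasurableSet (A n) := fun n ↦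
    (by fun_prop : Measurable (‖· - x₀‖)) measurableSet_Ico
  have hcover : {y | R ≤ ‖y - x₀‖} ⊆ ⋃ n, A n := fun y (hy : R ≤ ‖y - x₀‖) ↦ by
    refine mem_iUnion.2 ⟨⌊‖y - x₀‖ - R⌋₊, ?_, ?_⟩
    · linarith [Nat.floor_le (sub_nonneg.2 hy)]
    · linarith [Nat.lt_floor_add_one (‖y - x₀‖ - R)]
  have hweight : ∀ n, ∀ y ∈ A n, ENNReal.ofReal (exp (-(‖y - x₀‖ - R) ^ 2 / (4 * T)))
      ≤ ENNReal.ofReal (exp (-n ^ 2 / (4 * T))) := fun n y hy ↦ by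
    have hn : (n : ℝ) ≤ ‖y - x₀‖ - R := by linarith [hy.1]
    gcongr
  have hvol : ∀ n : ℕ, volume (A n) ≤ ENNReal.ofReal ((R + n + 1) ^ 3 * v) := fun n ↦
    calc volume (A n) ≤ volume (ball x₀ (R + n + 1)) :=
          measure_mono fun y hy ↦ mem_ball_iff_norm.2 hy.2
      _ = ENNReal.ofReal ((R + n + 1) ^ 3 * v) := by
          rw [Measure.addHaar_ball _ _ (by positivity), finrank_euclideanSpace_fin,
            ENNReal.ofReal_mul (by positivity), ENNReal.ofReal_toReal measure_ball_lt_top.ne]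
  calc ∫⁻ y in {y | R ≤ ‖y - x₀‖}, ENNReal.ofReal (exp (-(‖y - x₀‖ - R) ^ 2 / (4 * T))) * ‖f y‖ₑ
      ≤ ∑' n : ℕ, ENNReal.ofReal (exp (-n ^ 2 / (4 * T))) * ∫⁻ y in A n, ‖f y‖ₑ :=
        setLIntegral_mul_le_tsum_of_subset_iUnion hcover hA (fun _ ↦ ENNReal.ofReal_ne_top)
          hweight
    _ ≤ ∑' n : ℕ, ENNReal.ofReal (exp (-n ^ 2 / (4 * T))) *
          (ENNReal.ofReal M * (ENNReal.ofReal ((R + n + 1) ^ 3 * v) + 8 / 3)) := by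
        gcongr with n
        refine (hf.setLIntegral_enorm_le hM ((hvol n).trans_lt ENNReal.ofReal_lt_top).ne).trans ?_
        gcongr
        exact hvol n
    _ = ∑' n : ℕ, ENNReal.ofReal (M * (exp (-n ^ 2 / (4 * T)) * ((R + n + 1) ^ 3 * v + 8 / 3))) :=
        tsum_congr fun n ↦ by
          rw [ENNReal.ofReal_mul hM, ENNReal.ofReal_mul (exp_nonneg _),
            ENNReal.ofReal_add (by positivity) (by positivity),
            ENNReal.ofReal_div_of_pos three_pos]
          norm_num
          ring
    _ = ENNReal.ofReal (M * farFieldConst R T) := by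
        rw [← ENNReal.ofReal_tsum_of_nonneg (fun n ↦ by positivity)
          ((summable_farFieldConst hR hT).mul_left M), tsum_mul_left]
        rfl

end FarField

/-- **Far-field Gaussian tail estimate against weak-`L³` data (estimate (A1)–(A2)/I₃₂).**
For `0 < r < R` and `T > 0` there is `C = C(R,r,T)` such that for every `u₀ ∈ L^{3,∞}`,
`x ∈ B_r(x₀)` and `t ∈ (0,T]`,
`∫_{‖y-x₀‖ ≥ R} t^{-3/2} e^{-‖x-y‖²/(4t)} |u₀(y)| dy
  ≤ C ‖u₀‖_{L^{3,∞}} t^{-3/2} e^{-(R-r)²/(4t)}`. -/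
theorem farfield_gaussian_tail_estimate
    (x₀ : E3) (r R T : ℝ) (hr : 0 < r) (hrR : r < R) (hT : 0 < T) :
    ∃ C > 0, ∀ u₀ : E3 → E3, wL3 u₀ < ⊤ → ∀ x ∈ ball x₀ r, ∀ t ∈ Ioc (0:ℝ) T,
      (∫⁻ y in {y : E3 | R ≤ ‖y - x₀‖},
          ENNReal.ofReal (t ^ (-(3:ℝ)/2) * Real.exp (-‖x - y‖^2 / (4*t)) * ‖u₀ y‖))
        ≤ ENNReal.ofReal
            (C * (wL3 u₀).toReal * t ^ (-(3:ℝ)/2) * Real.exp (-(R - r)^2 / (4*t))) := by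
  have hR : 0 < R := hr.trans hrR
  refine ⟨farFieldConst R T, farFieldConst_pos hR.le hT, fun u₀ hu₀ x hx t ⟨ht, htT⟩ ↦ ?_⟩
  set K := t ^ (-(3:ℝ)/2) * exp (-(R - r) ^ 2 / (4 * t))
  have hK : 0 ≤ K := by positivity
  calc _ ≤ ∫⁻ y in {y : E3 | R ≤ ‖y - x₀‖}, ENNReal.ofReal K *
          (ENNReal.ofReal (exp (-(‖y - x₀‖ - R) ^ 2 / (4 * T))) * ‖u₀ y‖ₑ) :=
        setLIntegral_mono' (measurableSet_le measurable_const (by fun_prop)) fun y hy ↦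
          ofReal_mul_exp_mul_norm_le (by positivity) hrR.le ht htT (mem_ball_iff_norm.1 hx).le hy
    _ = ENNReal.ofReal K * ∫⁻ y in {y : E3 | R ≤ ‖y - x₀‖},
          ENNReal.ofReal (exp (-(‖y - x₀‖ - R) ^ 2 / (4 * T))) * ‖u₀ y‖ₑ :=
        lintegral_const_mul' _ _ ENNReal.ofReal_ne_top
    _ ≤ ENNReal.ofReal K * ENNReal.ofReal ((wL3 u₀).toReal * farFieldConst R T) := by
        gcongr
        exact (hasWeakL3Bound_wL3 hu₀.ne).setLIntegral_exp_mul_enorm_le ENNReal.toReal_nonneg x₀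
          hR.le hT
    _ = _ := by
        rw [← ENNReal.ofReal_mul hK]
        congr 1
        ring
end
end
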